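/- Let v_1, …, v_d be LDP fan data. Then, after a cyclic relabeling of the indices, there exists an integer n with 0 ≤ n ≤ d such that det(v_i, v_{i+1}) = 1 for all 1 ≤ i ≤ n and det(v_i, v_{i+1}) ≥ 2 for all n+1 ≤ i ≤ d. In other words, the singular cones of any toric log del Pezzo surface occur consecutively in the cyclic order. -/

import Mathlib

/-- The determinant `det(u, w) = u₁w₂ − u₂w₁` of two integer vectors. -/
def detZ (u w : ℤ × ℤ) : ℤ := u.1 * w.2 - u.2 * w.1

/-- The real vector associated to an integer vector. -/
noncomputable def toR2 (u : ℤ × ℤ) : ℝ × ℝ := ((u.1 : ℝ), (u.2 : ℝ))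

/-- The cone `ℝ_{≥0} u + ℝ_{≥0} w` spanned by two integer vectors. -/
def coneOf (u w : ℤ × ℤ) : Set (ℝ × ℝ) :=
  {x | ∃ a b : ℝ, 0 ≤ a ∧ 0 ≤ b ∧ x = a • toR2 u + b • toR2 w}

/-- Complete fan data of length `d`: a cyclic sequence of primitive integer vectors with
`det(v_i, v_{i+1}) ≥ 1` whose successive cones cover `ℝ²` and have pairwise disjoint
interiors. -/
def IsCompleteFanData (d : ℕ) (v : ZMod d → ℤ × ℤ) : Prop :=
  3 ≤ d ∧
  (∀ i, Int.gcd (v i).1 (v i).2 = 1) ∧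
  (∀ i, 1 ≤ detZ (v i) (v (i + 1))) ∧
  (⋃ i, coneOf (v i) (v (i + 1))) = Set.univ ∧
  ∀ i j, i ≠ j →
    interior (coneOf (v i) (v (i + 1))) ∩ interior (coneOf (v j) (v (j + 1))) = ∅

/-- `f(i) = det(v_{i−1}, v_i) + det(v_i, v_{i+1}) + det(v_{i+1}, v_{i−1})`. -/
def fanF (d : ℕ) (v : ZMod d → ℤ × ℤ) (i : ZMod d) : ℤ :=
  detZ (v (i - 1)) (v i) + detZ (v i) (v (i + 1)) + detZ (v (i + 1)) (v (i - 1))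

/-- LDP fan data: complete fan data with `f(i) ≥ 1` for all `i`. -/
def IsLDPFanData (d : ℕ) (v : ZMod d → ℤ × ℤ) : Prop :=
  IsCompleteFanData d v ∧ ∀ i, 1 ≤ fanF d v i

/-- The number of singular cones, i.e. indices `i` with `det(v_i, v_{i+1}) ≥ 2`. -/
noncomputable def numSingular (d : ℕ) (v : ZMod d → ℤ × ℤ) : ℕ :=
  {i : ZMod d | 2 ≤ detZ (v i) (v (i + 1))}.ncard

/-- Equivalence of fan data: some `GL(2, ℤ)` matrix maps the vector set of one
bijectively onto the vector set of the other. -/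
def FanEquiv {d₁ d₂ : ℕ} (v : ZMod d₁ → ℤ × ℤ) (w : ZMod d₂ → ℤ × ℤ) : Prop :=
  ∃ M : Matrix (Fin 2) (Fin 2) ℤ, IsUnit M.det ∧
    (fun u : ℤ × ℤ => (M 0 0 * u.1 + M 0 1 * u.2, M 1 0 * u.1 + M 1 1 * u.2)) ''
      Set.range v = Set.range w

/-- The cyclic sequence of length `d − 1` obtained by deleting the vector `v_k`:
it lists `v_{k+1}, v_{k+2}, …, v_{k+d−1}`. -/
def deleteAt {d : ℕ} (v : ZMod d → ℤ × ℤ) (k : ZMod d) : ZMod (d - 1) → ℤ × ℤ :=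
  fun i => v (k + 1 + (i.val : ZMod d))

/-- The cyclic sequence of length `d + 1` obtained by inserting `v_k + v_{k+1}`
between `v_k` and `v_{k+1}`. -/
def insertAt {d : ℕ} (v : ZMod d → ℤ × ℤ) (k : ZMod d) : ZMod (d + 1) → ℤ × ℤ :=
  fun i =>
    if i.val ≤ k.val then v ((i.val : ℕ) : ZMod d)
    else if i.val = k.val + 1 then v k + v (k + 1)
    else v ((i.val - 1 : ℕ) : ZMod d)


/-!
A nonsingular cone `(v i, v (i + 1))` is an edge at lattice height one of the polygon with
vertices `v k`. The LDP condition says this polygon is locally convex, and together with the fan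
structure it is convex, so the integral linear form equal to `1` on that edge is `≤ 0` at every
other vertex. If two nonsingular cones `(A, B)` and `(D, E)` were each followed by a singular
cone `(B, C)`, `(E, F)`, these inequalities, evaluated at `C` written in the basis `(A, B)` and
at `F` in the basis `(D, E)`, leave only the configuration of two antiparallel edges, where the
singular cones do not fit. So the cycle passes from nonsingular to singular cones only once.
-/

lemma detZ_self (u : ℤ × ℤ) : detZ u u = 0 := by
  simp only [detZ]; ring

lemma detZ_swap (u w : ℤ × ℤ) : detZ w u = -detZ u w := by
  simp only [detZ]; ring

lemma detZ_sub_right (u w z : ℤ × ℤ) : detZ u (w - z) = detZ u w - detZ u z := by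
  simp only [detZ, Prod.fst_sub, Prod.snd_sub]; ring

lemma detZ_sub_left (u w z : ℤ × ℤ) : detZ (u - w) z = detZ u z - detZ w z := by
  simp only [detZ, Prod.fst_sub, Prod.snd_sub]; ring

/-- Plücker relation for a unimodular pair `(A, B)`: `x ↦ (detZ x B, detZ A x)` are the
coordinates in the basis `(A, B)`. -/
lemma detZ_eq_of_detZ_eq_one {A B : ℤ × ℤ} (hAB : detZ A B = 1) (Z W : ℤ × ℤ) :
    detZ Z W = detZ Z B * detZ A W - detZ A Z * detZ W B := by
  simp only [detZ] at hAB ⊢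
  linear_combination (-(Z.1 * W.2 - Z.2 * W.1)) * hAB

lemma eq_detZ_smul_add_detZ_smul {A B : ℤ × ℤ} (hAB : detZ A B = 1) (Z : ℤ × ℤ) :
    Z = detZ Z B • A + detZ A Z • B := by
  simp only [detZ] at hAB ⊢
  ext
  · simp only [Prod.fst_add, Prod.smul_fst, smul_eq_mul]
    linear_combination (-Z.1) * hAB
  · simp only [Prod.snd_add, Prod.smul_snd, smul_eq_mul]
    linear_combination (-Z.2) * hAB

lemma eq_one_or_eq_neg_one_of_gcd_smul {c : ℤ} {u : ℤ × ℤ}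
    (h : Int.gcd (c • u).1 (c • u).2 = 1) : c = 1 ∨ c = -1 := by
  simp only [Prod.smul_fst, Prod.smul_snd, smul_eq_mul, Int.gcd_mul_left] at h
  exact Int.natAbs_eq_iff.mp (Nat.eq_one_of_mul_eq_one_right h)

def openCone (u w : ℤ × ℤ) : Set (ℤ × ℤ) := {z | 0 < detZ u z ∧ 0 < detZ z w}

/-- In the coordinates `x = detZ Z B`, `y = detZ A Z`, a primitive `Z ∉ {A, B}` with
`x + y ≥ 1` lies in the open cone `(A, B)` if `x, y > 0`, in `(B, C)` if `x < 0` and in `(P, A)`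
if `y < 0`: the neighbours `P`, `C` lie on the origin's side of the edge line. -/
lemma detZ_sub_nonpos_of_notMem_openCone {P A B C Z : ℤ × ℤ} (hAB : detZ A B = 1)
    (hPA : 0 < detZ P A) (hBC : 0 < detZ B C)
    (hP : detZ P (B - A) ≤ 0) (hC : detZ C (B - A) ≤ 0)
    (hZ : Int.gcd Z.1 Z.2 = 1) (hZA : Z ≠ A) (hZB : Z ≠ B)
    (hZPA : Z ∉ openCone P A) (hZAB : Z ∉ openCone A B) (hZBC : Z ∉ openCone B C) :
    detZ Z (B - A) ≤ 0 := by
  have hsub : ∀ X : ℤ × ℤ, detZ X (B - A) = detZ X B + detZ A X := fun X => by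
    rw [detZ_sub_right, detZ_swap A X, sub_neg_eq_add]
  have hplu := detZ_eq_of_detZ_eq_one hAB
  rw [hsub] at hP hC ⊢
  by_contra! hpos
  rcases lt_trichotomy (detZ Z B) 0 with hx | hx | hx
  · refine hZBC ⟨?_, ?_⟩
    · rw [hplu B Z, detZ_self, hAB]; linarith
    · rw [hplu B C, detZ_self, hAB] at hBC
      rw [hplu Z C]
      nlinarith
  · have hZ' := eq_detZ_smul_add_detZ_smul hAB Z
    rw [hx, zero_smul, zero_add] at hZ'
    rw [hZ'] at hZ hZB
    rcases eq_one_or_eq_neg_one_of_gcd_smul hZ with h1 | h1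
    · exact hZB (by rw [h1, one_smul])
    · linarith
  · rcases lt_trichotomy (detZ A Z) 0 with hy | hy | hy
    · refine hZPA ⟨?_, ?_⟩
      · rw [hplu P A, detZ_self, hAB] at hPA
        rw [hplu P Z]
        nlinarith
      · rw [hplu Z A, detZ_self, hAB]; linarith
    · have hZ' := eq_detZ_smul_add_detZ_smul hAB Z
      rw [hy, zero_smul, add_zero] at hZ'
      rw [hZ'] at hZ hZA
      rcases eq_one_or_eq_neg_one_of_gcd_smul hZ with h1 | h1
      · exact hZA (by rw [h1, one_smul])
      · linarith
    · exact hZAB ⟨hy, hx⟩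

/-- A primitive vector parallel to the edge `B - A` of a unimodular cone is `±(B - A)`, which
spans a unimodular cone with `B`. -/
lemma detZ_sub_ne_zero_of_two_le {A B C : ℤ × ℤ} (hAB : detZ A B = 1) (hBC : 2 ≤ detZ B C)
    (hC : Int.gcd C.1 C.2 = 1) : detZ C (B - A) ≠ 0 := by
  intro h0
  have hA : detZ A (B - A) = 1 := by rw [detZ_sub_right, detZ_self, hAB, sub_zero]
  have hC' := eq_detZ_smul_add_detZ_smul hA C
  rw [h0, zero_smul, zero_add] at hC'
  have hB : detZ B (B - A) = 1 := by rw [detZ_sub_right, detZ_self, detZ_swap, hAB]; ring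
  have hBC' : detZ B C = detZ A C := by
    rw [detZ_eq_of_detZ_eq_one hA B C, hB, h0]; ring
  rw [hC'] at hC
  rcases eq_one_or_eq_neg_one_of_gcd_smul hC with h1 | h1 <;> omega

/-- With `C = x • A + y • B`, where `x = detZ C B ≤ -2` and `x + y ≤ 0`, the bound
`detZ C e = x * detZ A e + y * detZ B e ≤ 1` rules out `detZ A e < detZ B e ≤ 0`. -/
lemma detZ_le_detZ_of_two_le {A B C e : ℤ × ℤ} (hAB : detZ A B = 1) (hBC : 2 ≤ detZ B C)
    (hC : detZ C (B - A) ≤ 0) (hB : detZ B e ≤ 0) (hCe : detZ C e ≤ 1) :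
    detZ B e ≤ detZ A e := by
  by_contra! hlt
  rw [detZ_eq_of_detZ_eq_one hAB C e, detZ_swap B e] at hCe
  rw [detZ_sub_right, detZ_swap A C] at hC
  rw [detZ_swap C B] at hBC
  nlinarith

/-- Comparing each edge form on the other edge forces `E - D = A - B`; the singular cones then
force `C = D` and `F = A`, and in the parallelogram `A B D E` the cone `(E, A)` is not positive. -/
lemma false_of_nonsingular_singular_pairs {A B C D E F : ℤ × ℤ}
    (hAB : detZ A B = 1) (hDE : detZ D E = 1) (hBC : 2 ≤ detZ B C) (hEF : 2 ≤ detZ E F)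
    (hCp : Int.gcd C.1 C.2 = 1) (hFp : Int.gcd F.1 F.2 = 1)
    (hC : detZ C (B - A) ≤ 0) (hF : detZ F (E - D) ≤ 0)
    (hA : detZ A (E - D) ≤ 0) (hB : detZ B (E - D) ≤ 0) (hE : detZ E (B - A) ≤ 0)
    (hCD : detZ C (E - D) ≤ 0 ∨ C = D) (hFA : detZ F (B - A) ≤ 0 ∨ F = A) : False := by
  have hA1 : detZ A (B - A) = 1 := by rw [detZ_sub_right, detZ_self, hAB, sub_zero]
  have hD1 : detZ D (E - D) = 1 := by rw [detZ_sub_right, detZ_self, hDE, sub_zero]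
  have hCe : detZ C (E - D) ≤ 1 := by
    rcases hCD with h | rfl
    · linarith
    · exact hD1.le
  have hFe : detZ F (B - A) ≤ 1 := by
    rcases hFA with h | rfl
    · linarith
    · exact hA1.le
  have hBA := detZ_le_detZ_of_two_le hAB hBC hC hB hCe
  have hED := detZ_le_detZ_of_two_le hDE hEF hF hE hFe
  have hpar : detZ (E - D) (B - A) = 0 := by
    have h1 : detZ (E - D) (B - A) = detZ E (B - A) - detZ D (B - A) := detZ_sub_left ..
    have h2 : detZ (E - D) (B - A) = detZ A (E - D) - detZ B (E - D) := by
      simp only [detZ, Prod.fst_sub, Prod.snd_sub]; ring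
    linarith
  have hanti : E - D = A - B := by
    have he := eq_detZ_smul_add_detZ_smul hA1 (E - D)
    rw [hpar, zero_smul, zero_add] at he
    have hunit : detZ A (E - D) * detZ D (B - A) = 1 := by
      rw [← hD1, detZ_eq_of_detZ_eq_one hA1 D (E - D), hpar]; ring
    rcases Int.eq_one_or_neg_one_of_mul_eq_one hunit with h1 | h1
    · linarith
    · rw [he, h1, neg_one_smul, neg_sub]
  have hflip : ∀ x, detZ x (E - D) = -detZ x (B - A) := fun x => by
    rw [hanti, detZ_sub_right, detZ_sub_right]; ring
  have hCD' : C = D := by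
    refine hCD.resolve_left fun h => detZ_sub_ne_zero_of_two_le hAB hBC hCp ?_
    rw [hflip] at h
    linarith
  have hFA' : F = A := by
    refine hFA.resolve_left fun h => detZ_sub_ne_zero_of_two_le hDE hEF hFp ?_
    have := hflip F
    linarith
  subst D F
  obtain rfl : E = C + (A - B) := by rw [← hanti]; abel
  simp only [detZ, Prod.fst_add, Prod.snd_add, Prod.fst_sub, Prod.snd_sub] at hAB hDE hBC hEF
  nlinarith

lemma toR2_mem_interior_coneOf {u w p : ℤ × ℤ} (huw : 0 < detZ u w) (hup : 0 < detZ u p)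
    (hpw : 0 < detZ p w) : toR2 p ∈ interior (coneOf u w) := by
  simp only [detZ] at huw hup hpw
  have hD : (0 : ℝ) < u.1 * w.2 - u.2 * w.1 := by exact_mod_cast huw
  refine mem_interior.2 ⟨{x | 0 < (u.1 : ℝ) * x.2 - u.2 * x.1 ∧ 0 < x.1 * (w.2 : ℝ) - x.2 * w.1},
    ?_, ?_, ?_⟩
  · rintro x ⟨h1, h2⟩
    refine ⟨(x.1 * w.2 - x.2 * w.1) / (u.1 * w.2 - u.2 * w.1),
      (u.1 * x.2 - u.2 * x.1) / (u.1 * w.2 - u.2 * w.1), by positivity, by positivity, ?_⟩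
    ext <;> simp only [toR2, Prod.fst_add, Prod.snd_add, Prod.smul_fst, Prod.smul_snd,
      smul_eq_mul] <;> rw [div_mul_eq_mul_div, div_mul_eq_mul_div, ← add_div,
        eq_div_iff hD.ne'] <;> ring
  · refine IsOpen.and (isOpen_lt continuous_const ?_) (isOpen_lt continuous_const ?_) <;> fun_prop
  · show 0 < (u.1 : ℝ) * p.2 - u.2 * p.1 ∧ 0 < (p.1 : ℝ) * w.2 - p.2 * w.1
    exact ⟨by exact_mod_cast hup, by exact_mod_cast hpw⟩

/-- The lattice point `N • z + z'` with `N` large lies in both open cones. -/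
lemma interior_coneOf_inter_nonempty {u w z z' : ℤ × ℤ} (huw : 0 < detZ u w)
    (hzz' : 0 < detZ z z') (hzw : 0 < detZ z w) (huz : 0 < detZ u z ∨ u = z) :
    (interior (coneOf u w) ∩ interior (coneOf z z')).Nonempty := by
  set N : ℤ := 1 + |detZ u z'| + |detZ z' w|
  have hlin : ∀ a : ℤ × ℤ, detZ a (N • z + z') = N * detZ a z + detZ a z' ∧
      detZ (N • z + z') a = N * detZ z a + detZ z' a := fun a => by
    simp only [detZ, Prod.fst_add, Prod.snd_add, Prod.smul_fst, Prod.smul_snd, smul_eq_mul]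
    constructor <;> ring
  have hN : 0 ≤ N ∧ |detZ u z'| + 1 ≤ N ∧ |detZ z' w| + 1 ≤ N := by
    refine ⟨by positivity, ?_, ?_⟩ <;> linarith [abs_nonneg (detZ u z'), abs_nonneg (detZ z' w)]
  have hz : 0 < detZ z (N • z + z') := by rw [(hlin z).1, detZ_self]; linarith
  have hu : 0 < detZ u (N • z + z') := by
    rcases huz with huz | rfl
    · rw [(hlin u).1]
      nlinarith [neg_abs_le (detZ u z'), mul_le_mul_of_nonneg_left (huz : (1 : ℤ) ≤ _) hN.1]
    · exact hz
  have hw : 0 < detZ (N • z + z') w := by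
    rw [(hlin w).2]
    nlinarith [neg_abs_le (detZ z' w), mul_le_mul_of_nonneg_left (hzw : (1 : ℤ) ≤ _) hN.1]
  have hz' : 0 < detZ (N • z + z') z' := by
    rw [(hlin z').2, detZ_self]
    nlinarith [mul_le_mul_of_nonneg_left (hzz' : (1 : ℤ) ≤ _) hN.1]
  exact ⟨_, toR2_mem_interior_coneOf huw hu hw, toR2_mem_interior_coneOf hzz' hz hz'⟩

namespace IsCompleteFanData

variable {d : ℕ} {v : ZMod d → ℤ × ℤ}

lemma detZ_pos (h : IsCompleteFanData d v) (i : ZMod d) : 0 < detZ (v i) (v (i + 1)) :=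
  h.2.2.1 i

lemma two_le_detZ (h : IsCompleteFanData d v) {i : ZMod d} (hi : detZ (v i) (v (i + 1)) ≠ 1) :
    2 ≤ detZ (v i) (v (i + 1)) := by
  have := h.detZ_pos i
  omega

lemma injective (h : IsCompleteFanData d v) : Function.Injective v := by
  intro j k hjk
  by_contra hne
  refine (interior_coneOf_inter_nonempty (h.detZ_pos j) (h.detZ_pos k) ?_ (Or.inr hjk)).ne_empty
    (h.2.2.2.2 j k hne)
  rw [← hjk]
  exact h.detZ_pos j

lemma notMem_openCone (h : IsCompleteFanData d v) (j k : ZMod d) :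
    v k ∉ openCone (v j) (v (j + 1)) := by
  rintro ⟨hjk, hkj⟩
  have hne : j ≠ k := by
    rintro rfl
    rw [detZ_self] at hjk
    exact hjk.false
  exact (interior_coneOf_inter_nonempty (h.detZ_pos j) (h.detZ_pos k) hkj (Or.inl hjk)).ne_empty
    (h.2.2.2.2 j k hne)

end IsCompleteFanData

namespace IsLDPFanData

variable {d : ℕ} {v : ZMod d → ℤ × ℤ}

lemma detZ_prev_lt (h : IsLDPFanData d v) (i : ZMod d) :
    detZ (v (i - 1)) (v (i + 1) - v i) < detZ (v i) (v (i + 1)) := by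
  have e : fanF d v i = detZ (v i) (v (i + 1)) - detZ (v (i - 1)) (v (i + 1) - v i) := by
    simp only [fanF, detZ, Prod.fst_sub, Prod.snd_sub]; ring
  linarith [h.2 i]

lemma detZ_next_lt (h : IsLDPFanData d v) (i : ZMod d) :
    detZ (v (i + 1 + 1)) (v (i + 1) - v i) < detZ (v i) (v (i + 1)) := by
  have e : fanF d v (i + 1) =
      detZ (v i) (v (i + 1)) - detZ (v (i + 1 + 1)) (v (i + 1) - v i) := by
    simp only [fanF, add_sub_cancel_right, detZ, Prod.fst_sub, Prod.snd_sub]; ring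
  linarith [h.2 (i + 1)]

/-- Convexity of the polygon with vertices `v`: `detZ · (v (i + 1) - v i)` is the integral
linear form equal to `1` on the nonsingular edge, so every other vertex lies strictly on the
origin's side of the edge line. -/
lemma detZ_sub_nonpos (h : IsLDPFanData d v) {i k : ZMod d}
    (hi : detZ (v i) (v (i + 1)) = 1) (hki : k ≠ i) (hki' : k ≠ i + 1) :
    detZ (v k) (v (i + 1) - v i) ≤ 0 := by
  have hc := h.1
  refine detZ_sub_nonpos_of_notMem_openCone hi (P := v (i - 1)) (C := v (i + 1 + 1)) ?_
    (hc.detZ_pos (i + 1)) ?_ ?_ (hc.2.1 k) (hc.injective.ne hki) (hc.injective.ne hki') ?_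
    (hc.notMem_openCone i k) (hc.notMem_openCone (i + 1) k)
  · simpa using hc.detZ_pos (i - 1)
  · linarith [h.detZ_prev_lt i]
  · linarith [h.detZ_next_lt i]
  · simpa using hc.notMem_openCone (i - 1) k

lemma eq_of_nonsingular_singular (h : IsLDPFanData d v) {i j : ZMod d}
    (hi : detZ (v i) (v (i + 1)) = 1) (hi' : 2 ≤ detZ (v (i + 1)) (v (i + 1 + 1)))
    (hj : detZ (v j) (v (j + 1)) = 1) (hj' : 2 ≤ detZ (v (j + 1)) (v (j + 1 + 1))) :
    i = j := by
  by_contra hij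
  have hji1 : j ≠ i + 1 := by rintro rfl; omega
  have hij1 : i ≠ j + 1 := by rintro rfl; omega
  have hi1j1 : i + 1 ≠ j + 1 := fun e => hij (add_right_cancel e)
  refine false_of_nonsingular_singular_pairs hi hj hi' hj' (h.1.2.1 _) (h.1.2.1 _)
    (by linarith [h.detZ_next_lt i]) (by linarith [h.detZ_next_lt j])
    (h.detZ_sub_nonpos hj hij hij1) (h.detZ_sub_nonpos hj hji1.symm hi1j1)
    (h.detZ_sub_nonpos hi hij1.symm hi1j1.symm) ?_ ?_
  · by_cases e : i + 1 + 1 = j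
    · exact Or.inr (congrArg v e)
    · exact Or.inl (h.detZ_sub_nonpos hj e fun e' => hji1 (add_right_cancel e').symm)
  · by_cases e : j + 1 + 1 = i
    · exact Or.inr (congrArg v e)
    · exact Or.inl (h.detZ_sub_nonpos hi e fun e' => hij1 (add_right_cancel e').symm)

end IsLDPFanData

lemma exists_not_and_add_one {d : ℕ} [NeZero d] {P : ZMod d → Prop} {a b : ZMod d}
    (ha : ¬P a) (hb : P b) : ∃ c, ¬P c ∧ P (c + 1) := by
  by_contra! hstep
  have hfalse : ∀ m : ℕ, ¬P (a + m) := by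
    intro m
    induction m with
    | zero => simpa using ha
    | succ m ih => rw [Nat.cast_succ, ← add_assoc]; exact hstep _ ih
  have := hfalse (b - a).val
  rw [ZMod.natCast_zmod_val, add_sub_cancel] at this
  exact this hb

/-- Start at a switch `¬P c`, `P (c + 1)`; a true value after the first run of `P` would
produce a second switch from true to false. -/
lemma exists_rotation_of_descent_unique {d : ℕ} [NeZero d] (P : ZMod d → Prop)
    (huniq : ∀ i j, P i → ¬P (i + 1) → P j → ¬P (j + 1) → i = j) :
    ∃ (c : ZMod d) (n : ℕ), n ≤ d ∧ (∀ i : ℕ, 1 ≤ i → i ≤ n → P (c + i)) ∧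
      ∀ i : ℕ, n + 1 ≤ i → i ≤ d → ¬P (c + i) := by
  classical
  by_cases hall : ∀ k, P k
  · exact ⟨0, d, le_rfl, fun i _ _ => hall _, fun i h1 h2 => by omega⟩
  by_cases hnone : ∀ k, ¬P k
  · exact ⟨0, 0, Nat.zero_le _, fun i h1 h2 => by omega, fun i _ _ => hnone _⟩
  obtain ⟨a, ha⟩ := not_forall.mp hall
  obtain ⟨b, hb⟩ := not_forall_not.mp hnone
  obtain ⟨c, hc, hc1⟩ := exists_not_and_add_one ha hb
  have hd : (((d - 1 + 1 : ℕ)) : ZMod d) = 0 := by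
    rw [Nat.sub_add_cancel NeZero.one_le, ZMod.natCast_self]
  have hex : ∃ m : ℕ, ¬P (c + (m + 1 : ℕ)) := ⟨d - 1, by rwa [hd, add_zero]⟩
  set n := Nat.find hex
  have hn : ¬P (c + (n + 1 : ℕ)) := Nat.find_spec hex
  have hnd : n ≤ d - 1 := Nat.find_min' hex (by rwa [hd, add_zero])
  have htrue : ∀ i : ℕ, 1 ≤ i → i ≤ n → P (c + i) := fun i h1 h2 => by
    have := Nat.find_min hex (m := i - 1) (by omega)
    rwa [not_not, Nat.sub_add_cancel h1] at this
  have hn1 : 1 ≤ n := by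
    by_contra! h0
    rw [Nat.lt_one_iff.mp h0, zero_add, Nat.cast_one] at hn
    exact hn hc1
  refine ⟨c, n, by omega, htrue, fun i hi hid => ?_⟩
  refine Nat.decreasingInduction' (P := fun k => ¬P (c + k)) (fun k hk hik hk1 hk0 => ?_) hid
    (by rwa [ZMod.natCast_self, add_zero])
  have hkn : c + k = c + n := by
    refine huniq _ _ hk0 ?_ (htrue n hn1 le_rfl) ?_
    · rwa [add_assoc, ← Nat.cast_succ]
    · rwa [add_assoc, ← Nat.cast_succ]
  have := congrArg ZMod.val (add_left_cancel hkn)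
  rw [ZMod.val_cast_of_lt hk, ZMod.val_cast_of_lt (by omega)] at this
  omega

/-- The singular cones of a toric log del Pezzo surface occur consecutively: after a
cyclic relabeling `i ↦ c + i`, there is `n` with `0 ≤ n ≤ d` such that the first `n`
cones are nonsingular and the remaining `d − n` cones are singular. -/
theorem singular_cones_consecutive (d : ℕ) (v : ZMod d → ℤ × ℤ)
    (h : IsLDPFanData d v) :
    ∃ (c : ZMod d) (n : ℕ), n ≤ d ∧
      (∀ i : ℕ, 1 ≤ i → i ≤ n →
        detZ (v (c + (i : ZMod d))) (v (c + (i : ZMod d) + 1)) = 1) ∧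
      (∀ i : ℕ, n + 1 ≤ i → i ≤ d →
        2 ≤ detZ (v (c + (i : ZMod d))) (v (c + (i : ZMod d) + 1))) := by
  have : NeZero d := ⟨by have := h.1.1; omega⟩
  obtain ⟨c, n, hnd, hns, hs⟩ :=
    exists_rotation_of_descent_unique (fun k => detZ (v k) (v (k + 1)) = 1)
      fun i j hi hi' hj hj' => h.eq_of_nonsingular_singular hi (h.1.two_le_detZ hi') hj
        (h.1.two_le_detZ hj')
  exact ⟨c, n, hnd, hns, fun i h1 h2 => h.1.two_le_detZ (hs i h1 h2)⟩
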